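/- arXiv:2512.14966 — 2 statements merged into one kernel-verified Lean document; each statement's English description precedes it below -/
import Mathlib

section
/- Let d ∈ ℕ with d ≥ 1 and 1 ≤ r < ∞. Then for every k ≥ ⌈19^r⌉^(2d−1) + 1 and every step preserving continuous map F : S_{ℓ∞^k} → S_{ℓ_r^k} such that F(1,…,1) ≠ F(−1,…,−1), one has ω_F(1/d) ≥ 1/2, i.e., there exist x, y ∈ S_{ℓ∞^k} with ‖x − y‖_∞ ≤ 1/d and ‖F(x) − F(y)‖_r ≥ 1/2. -/
/-- The sup norm (`ℓ∞` norm) on `ℝ^k`. -/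
noncomputable def supNorm {k : ℕ} (x : Fin k → ℝ) : ℝ := ⨆ i, |x i|

/-- The `ℓ_r` norm on `ℝ^k`. -/
noncomputable def lrNorm (r : ℝ) {k : ℕ} (x : Fin k → ℝ) : ℝ :=
  (∑ i, |x i| ^ r) ^ (1 / r)

/-!
Step preservation makes `F 1` and `F (-1)` constant unit vectors, so `F (-1) = -F 1` and
`‖F 1 - F (-1)‖_r = 2`. For `d = 1` the chain `1, eᵢ, eᵢ - 1, -1` of unit steps already forces a
step of size at least `1/2`.

For `d ≥ 2` split the coordinates into layers `0, …, d + 1` whose sizes grow by the factor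
`Q = ⌊7^r⌋` (this is what `k > ⌈19^r⌉^(2d-1)` pays for), and move a point from `1` to `-1` by
placing layer `m` at height `clip ((s - 2m)/d)`. The common value of `F` on the top layer changes
sign, so at some point `u` it vanishes and `F u` has `r`-mass at least `1/2` on the layers of one
parity `q`. Moving every layer by `1/d` merges layer `m` with layer `m + 1` for each `m` of parity
`q`; then `F` is constant on each merged pair, and since the upper layer is `Q` times larger, the
image carries mass at most `1/(1 + Q) ≤ 7^(-r)` on the parity-`q` layers. Two unit vectors whose
masses on a set differ that much are at `ℓ_r` distance at least `1/2`.
-/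

open Finset

section Norms

variable {k : ℕ}

theorem supNorm_eq_norm (x : Fin k → ℝ) : supNorm x = ‖x‖ := by
  refine le_antisymm (Real.iSup_le (f := fun i => |x i|) (fun i => norm_le_pi_norm x i)
    (norm_nonneg x)) ?_
  refine (pi_norm_le_iff_of_nonneg (Real.iSup_nonneg fun i => abs_nonneg (x i))).2 fun i => ?_
  exact le_ciSup (f := fun i => |x i|) (Set.finite_range _).bddAbove i

theorem norm_eq_one_of_abs_le_one {ι : Type*} [Fintype ι] {x : ι → ℝ} (hx : ∀ i, |x i| ≤ 1)
    {i : ι} (hi : |x i| = 1) : ‖x‖ = 1 :=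
  le_antisymm ((pi_norm_le_iff_of_nonneg zero_le_one).2 hx) (hi ▸ norm_le_pi_norm x i)

variable {r : ℝ}

theorem lrNorm_add_le (hr : 1 ≤ r) (x y : Fin k → ℝ) :
    lrNorm r (x + y) ≤ lrNorm r x + lrNorm r y :=
  Real.Lp_add_le univ x y hr

theorem lrNorm_smul (hr : 0 < r) (c : ℝ) (x : Fin k → ℝ) :
    lrNorm r (c • x) = |c| * lrNorm r x := by
  simp only [lrNorm, Pi.smul_apply, smul_eq_mul, abs_mul,
    Real.mul_rpow (abs_nonneg c) (abs_nonneg _), ← mul_sum]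
  rw [Real.mul_rpow (by positivity) (sum_nonneg fun i _ => by positivity), one_div,
    Real.rpow_rpow_inv (abs_nonneg c) hr.ne']

theorem lrNorm_const (hr : 0 < r) (a : ℝ) :
    lrNorm r (fun _ : Fin k => a) = (k : ℝ) ^ (1 / r) * |a| := by
  rw [lrNorm, sum_const, card_univ, Fintype.card_fin, nsmul_eq_mul,
    Real.mul_rpow k.cast_nonneg (by positivity), one_div, Real.rpow_rpow_inv (abs_nonneg a) hr.ne']

theorem sum_rpow_eq_one_of_lrNorm_eq_one (hr : 0 < r) {x : Fin k → ℝ} (hx : lrNorm r x = 1) :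
    ∑ i, |x i| ^ r = 1 := by
  rw [lrNorm, one_div] at hx
  rw [← Real.rpow_inv_rpow (sum_nonneg fun i _ => by positivity) hr.ne', hx, Real.one_rpow]

theorem half_le_lrNorm_iff (hr : 0 < r) (x : Fin k → ℝ) :
    1 / 2 ≤ lrNorm r x ↔ (1 / 2) ^ r ≤ ∑ i, |x i| ^ r := by
  rw [lrNorm, one_div r, Real.le_rpow_inv_iff_of_pos (by norm_num)
    (sum_nonneg fun i _ => by positivity) hr]

end Norms

theorem eq_neg_of_lrNorm_const_eq_one {k : ℕ} {r : ℝ} (hr : 0 < r) {a b : ℝ}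
    (ha : lrNorm r (fun _ : Fin k => a) = 1) (hb : lrNorm r (fun _ : Fin k => b) = 1)
    (hab : a ≠ b) : b = -a := by
  rw [lrNorm_const hr] at ha hb
  have : |b| = |a| := mul_left_cancel₀ (left_ne_zero_of_mul_eq_one ha) (hb.trans ha.symm)
  exact (abs_eq_abs.1 this).resolve_left hab.symm

theorem apply_neg_one_eq_neg_apply_one {k : ℕ} [NeZero k] {r : ℝ} (hr : 0 < r)
    {F : (Fin k → ℝ) → Fin k → ℝ} (hFmaps : ∀ x, ‖x‖ = 1 → lrNorm r (F x) = 1)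
    (hstep : ∀ x, ‖x‖ = 1 → ∀ i j, x i = x j → F x i = F x j) (hne : F 1 ≠ F (-1)) :
    F (-1) = -F 1 := by
  have hF1 : F 1 = fun _ => F 1 0 := funext fun i => hstep 1 norm_one i 0 rfl
  have hFm1 : F (-1) = fun _ => F (-1) 0 := funext fun i => hstep (-1) (by simp) i 0 rfl
  have := eq_neg_of_lrNorm_const_eq_one hr (hF1 ▸ hFmaps 1 norm_one)
    (hFm1 ▸ hFmaps (-1) (by simp)) fun h => hne (by rw [hF1, hFm1, h])
  rw [hFm1, hF1, this]
  rfl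

theorem exists_far_pair_of_three_halves_le_lrNorm {k : ℕ} {r : ℝ} (hk : 2 ≤ k) (hr : 1 ≤ r)
    (F : (Fin k → ℝ) → (Fin k → ℝ)) (hgap : 3 / 2 ≤ lrNorm r (F 1 - F (-1))) :
    ∃ x y : Fin k → ℝ, ‖x‖ = 1 ∧ ‖y‖ = 1 ∧ ‖x - y‖ ≤ 1 ∧ 1 / 2 ≤ lrNorm r (F x - F y) := by
  by_contra! hF
  have : Nonempty (Fin k) := ⟨⟨0, by omega⟩⟩
  -- the chain `1, p, p - 1, -1` has steps `1 - p`, `1` and `p`, all of sup norm `1`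
  set p : Fin k → ℝ := Pi.single ⟨0, by omega⟩ 1
  have h1 : ‖(1 : Fin k → ℝ)‖ = 1 := norm_one
  have hp : ‖p‖ = 1 := by simp [p, Pi.norm_single]
  have hp1 : ‖p - 1‖ = 1 := by
    refine norm_eq_one_of_abs_le_one (fun i => ?_) (i := ⟨1, by omega⟩) (by simp [p])
    by_cases hi : i = ⟨0, by omega⟩ <;> simp [p, hi]
  have e1 := hF 1 p h1 hp (by rw [norm_sub_rev, hp1])
  have e2 := hF p (p - 1) hp hp1 (by simp [h1])
  have e3 := hF (p - 1) (-1) hp1 (by simp [h1]) (by simp [hp])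
  have htri : lrNorm r (F 1 - F (-1)) ≤ lrNorm r (F 1 - F p) +
      (lrNorm r (F p - F (p - 1)) + lrNorm r (F (p - 1) - F (-1))) := by
    rw [show F 1 - F (-1) = (F 1 - F p) + ((F p - F (p - 1)) + (F (p - 1) - F (-1))) by abel]
    exact (lrNorm_add_le hr _ _).trans (add_le_add_right (lrNorm_add_le hr _ _) _)
  linarith

theorem half_rpow_le_rpow_add_rpow {r x y : ℝ} (hr : 1 ≤ r) (hx : 0 ≤ x) (hy : 0 ≤ y)
    (hxy : 5 / 7 ≤ x + y) (hx' : (1 / 2) ^ (1 / r) - 1 / 7 ≤ x) :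
    (1 / 2 : ℝ) ^ r ≤ x ^ r + y ^ r := by
  have hr0 : 0 < r := by linarith
  rcases le_total 2 r with h2r | hr2
  · have h7 : 7 / 10 ≤ (1 / 2 : ℝ) ^ (1 / r) := by
      rw [one_div r, Real.le_rpow_inv_iff_of_pos (by norm_num) (by norm_num) hr0]
      calc (7 / 10 : ℝ) ^ r ≤ (7 / 10) ^ (2 : ℝ) :=
            Real.rpow_le_rpow_of_exponent_ge (by norm_num) (by norm_num) h2r
        _ ≤ 1 / 2 := by norm_num
    have : (1 / 2 : ℝ) ^ r ≤ x ^ r := Real.rpow_le_rpow (by norm_num) (by linarith) hr0.le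
    linarith [Real.rpow_nonneg hy r]
  · have hmean := (convexOn_rpow hr).2 (Set.mem_Ici.2 hx) (Set.mem_Ici.2 hy)
      (by norm_num : (0 : ℝ) ≤ 1 / 2) (by norm_num : (0 : ℝ) ≤ 1 / 2) (by norm_num)
    simp only [smul_eq_mul] at hmean
    have h75 : (7 / 5 : ℝ) ^ r ≤ 2 :=
      calc (7 / 5 : ℝ) ^ r ≤ (7 / 5) ^ (2 : ℝ) :=
            Real.rpow_le_rpow_of_exponent_le (by norm_num) hr2
        _ ≤ 2 := by norm_num
    calc (1 / 2 : ℝ) ^ r = (7 / 5) ^ r * (5 / 14) ^ r := by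
          rw [← Real.mul_rpow (by norm_num) (by norm_num)]; norm_num
      _ ≤ 2 * (1 / 2 * x + 1 / 2 * y) ^ r := by
          gcongr
          linarith
      _ ≤ x ^ r + y ^ r := by linarith

theorem half_le_lrNorm_sub {k : ℕ} {r : ℝ} (hr : 1 ≤ r) {v w : Fin k → ℝ} (s : Finset (Fin k))
    (hv : ∑ i, |v i| ^ r = 1) (hw : ∑ i, |w i| ^ r = 1) (hvs : 1 / 2 ≤ ∑ i ∈ s, |v i| ^ r)
    (hws : ∑ i ∈ s, |w i| ^ r ≤ (1 / 7) ^ r) : 1 / 2 ≤ lrNorm r (v - w) := by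
  have hr0 : 0 < r := by linarith
  have hnn : ∀ (t : Finset (Fin k)) (f : Fin k → ℝ), 0 ≤ ∑ i ∈ t, |f i| ^ r :=
    fun t f => sum_nonneg fun i _ => by positivity
  set A := ∑ i ∈ s, |v i| ^ r
  set B := ∑ i ∈ s, |w i| ^ r
  have hvc : ∑ i ∈ sᶜ, |v i| ^ r = 1 - A := by rw [← hv, ← sum_add_sum_compl s]; ring
  have hwc : ∑ i ∈ sᶜ, |w i| ^ r = 1 - B := by rw [← hw, ← sum_add_sum_compl s]; ring
  -- `x` and `y` are the parts of `‖v - w‖_r` on `s` and on `sᶜ`; Minkowski on each part gives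
  -- `x ≥ A^(1/r) - 1/7` and `x + y ≥ 5/7`
  set x := (∑ i ∈ s, |v i - w i| ^ r) ^ (1 / r) with hx
  set y := (∑ i ∈ sᶜ, |v i - w i| ^ r) ^ (1 / r) with hy
  have hxA : A ^ (1 / r) ≤ x + B ^ (1 / r) := by
    have := Real.Lp_add_le s (v - w) w hr
    simpa only [Pi.sub_apply, sub_add_cancel] using this
  have hyB : (1 - B) ^ (1 / r) ≤ y + (1 - A) ^ (1 / r) := by
    have := Real.Lp_add_le sᶜ (w - v) v hr
    simp only [Pi.sub_apply, sub_add_cancel, abs_sub_comm (w _)] at this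
    rwa [hvc, hwc] at this
  have hB : B ^ (1 / r) ≤ 1 / 7 := by
    calc B ^ (1 / r) ≤ ((1 / 7) ^ r) ^ (1 / r) := by gcongr
      _ = 1 / 7 := by rw [one_div r, Real.rpow_rpow_inv (by norm_num) hr0.ne']
  have hB' : B ≤ 1 / 7 :=
    hws.trans (by simpa using Real.rpow_le_self_of_le_one (by norm_num) (by norm_num) hr)
  have h1B : 6 / 7 ≤ (1 - B) ^ (1 / r) := by
    have hB0 := hnn s w
    have := Real.self_le_rpow_of_le_one (x := 1 - B) (y := 1 / r) (by linarith) (by linarith)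
      (by rw [div_le_one hr0]; exact hr)
    linarith
  have h1A : (1 - A) ^ (1 / r) ≤ A ^ (1 / r) :=
    Real.rpow_le_rpow (by linarith [hnn sᶜ v]) (by linarith) (by positivity)
  have hA : (1 / 2) ^ (1 / r) ≤ A ^ (1 / r) := by gcongr
  have hxr : x ^ r = ∑ i ∈ s, |v i - w i| ^ r := by
    rw [hx, one_div]; exact Real.rpow_inv_rpow (hnn s (v - w)) hr0.ne'
  have hyr : y ^ r = ∑ i ∈ sᶜ, |v i - w i| ^ r := by
    rw [hy, one_div]; exact Real.rpow_inv_rpow (hnn sᶜ (v - w)) hr0.ne'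
  rw [half_le_lrNorm_iff hr0, ← sum_add_sum_compl s]
  simp only [Pi.sub_apply]
  rw [← hxr, ← hyr]
  exact half_rpow_le_rpow_add_rpow hr (by positivity) (by positivity) (by linarith) (by linarith)

noncomputable def clip (x : ℝ) : ℝ := Set.projIcc (-1) 1 (by norm_num) x

theorem clip_of_one_le {x : ℝ} (hx : 1 ≤ x) : clip x = 1 := by
  simp [clip, Set.projIcc_of_right_le _ hx]

theorem clip_of_le_neg_one {x : ℝ} (hx : x ≤ -1) : clip x = -1 := by
  simp [clip, Set.projIcc_of_le_left _ hx]

theorem abs_clip_le_one (x : ℝ) : |clip x| ≤ 1 :=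
  abs_le.2 (Set.projIcc (-1 : ℝ) 1 (by norm_num) x).2

theorem abs_clip_sub_clip_le (x y : ℝ) : |clip x - clip y| ≤ |x - y| :=
  Set.abs_projIcc_sub_projIcc _

theorem continuous_clip : Continuous clip :=
  continuous_subtype_val.comp continuous_projIcc

theorem exists_fiber_card_eq {N k : ℕ} (n : ℕ → ℕ) (hk : ∑ m ∈ range N, n m = k) :
    ∃ ρ : Fin k → ℕ, (∀ i, ρ i < N) ∧ ∀ m < N, #{i | ρ i = m} = n m := by
  rw [← Fin.sum_univ_eq_sum_range] at hk
  subst hk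
  set e : (Σ m : Fin N, Fin (n m)) ≃ Fin (∑ m : Fin N, n m) := finSigmaFinEquiv
  refine ⟨fun i => (e.symm i).1, fun i => (e.symm i).1.isLt, fun m hm => ?_⟩
  calc #{i | ((e.symm i).1 : ℕ) = m} = Fintype.card {i // (e.symm i).1 = ⟨m, hm⟩} := by
        rw [Fintype.card_subtype]; simp only [Fin.ext_iff]
    _ = Fintype.card (Fin (n m)) :=
        Fintype.card_congr ((e.symm.subtypeEquiv fun _ => Iff.rfl).trans (Equiv.sigmaSubtype _))
    _ = n m := Fintype.card_fin _

theorem mul_sum_le_sum_of_forall_eq {ι : Type*} [DecidableEq ι] {s t : Finset ι} {f : ι → ℝ}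
    (hf : ∀ i, 0 ≤ f i) (hst : ∀ i ∈ s, ∀ j ∈ s ∪ t, f j = f i) {Q : ℕ} (hcard : Q * #s ≤ #t) :
    Q * ∑ i ∈ s, f i ≤ ∑ i ∈ t, f i := by
  rcases s.eq_empty_or_nonempty with rfl | ⟨i₀, hi₀⟩
  · simpa using sum_nonneg fun i _ => hf i
  · rw [sum_congr rfl fun i hi => hst i₀ hi₀ i (mem_union_left t hi),
      sum_congr rfl fun j hj => hst i₀ hi₀ j (mem_union_right s hj), sum_const, sum_const,
      nsmul_eq_mul, nsmul_eq_mul, ← mul_assoc]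
    exact mul_le_mul_of_nonneg_right (by exact_mod_cast hcard) (hf i₀)

structure Layering (k d Q : ℕ) where
  layer : Fin k → ℕ
  layer_le : ∀ i, layer i ≤ d + 1
  exists_layer_eq_zero : ∃ i, layer i = 0
  exists_layer_eq_top : ∃ i, layer i = d + 1
  mul_card_le_card : ∀ m ≤ d, Q * #{i | layer i = m} ≤ #{i | layer i = m + 1}

theorem Layering.nonempty {k d Q : ℕ} (hQ : 2 ≤ Q) (hk : 2 * Q ^ (d + 1) ≤ k) :
    Nonempty (Layering k d Q) := by
  obtain ⟨G, hG⟩ : ∃ G, ∑ m ∈ range (d + 1), Q ^ m = G := ⟨_, rfl⟩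
  have hGQ : G < Q ^ (d + 1) := hG ▸ Nat.geomSum_lt hQ fun m hm => mem_range.1 hm
  have hlow : ∑ m ∈ range (d + 1), (if m ≤ d then Q ^ m else k - G) = G :=
    hG ▸ sum_congr rfl fun m hm => if_pos (Nat.lt_succ_iff.1 (mem_range.1 hm))
  obtain ⟨ρ, hρ, hcard⟩ := exists_fiber_card_eq (N := d + 2) (k := k)
    (fun m => if m ≤ d then Q ^ m else k - G)
    (by rw [sum_range_succ, hlow, if_neg (by omega)]; omega)
  have hne : ∀ m ≤ d + 1, ∃ i, ρ i = m := by
    intro m hm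
    have : 0 < #{i | ρ i = m} := by
      rw [hcard m (by omega)]
      split_ifs <;> [positivity; omega]
    obtain ⟨i, hi⟩ := card_pos.1 this
    exact ⟨i, (mem_filter.1 hi).2⟩
  refine ⟨⟨ρ, fun i => Nat.lt_succ_iff.1 (hρ i), hne 0 (by omega), hne (d + 1) le_rfl,
    fun m hm => ?_⟩⟩
  rw [hcard m (by omega), hcard (m + 1) (by omega), if_pos hm, ← pow_succ']
  split_ifs
  · exact le_rfl
  · obtain rfl : m = d := by omega
    omega

def pathHeight (m : ℕ) : ℝ := 2 * m

def pairHeight (q m : ℕ) : ℝ := 2 * m + if m % 2 = q then 1 else -1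

theorem pairHeight_succ {q m : ℕ} (hm : m % 2 = q) : pairHeight q (m + 1) = pairHeight q m := by
  rw [pairHeight, pairHeight, if_pos hm, if_neg (by omega)]
  push_cast
  ring

theorem abs_pairHeight_sub_le (q m : ℕ) : |pairHeight q m - 2 * m| ≤ 1 := by
  unfold pairHeight; split_ifs <;> simp

namespace Layering

variable {k d Q : ℕ} (L : Layering k d Q)

noncomputable def config (h : ℕ → ℝ) (s : ℝ) : Fin k → ℝ :=
  fun i => clip ((s - h (L.layer i)) / d)

theorem continuous_config (h : ℕ → ℝ) : Continuous (L.config h) :=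
  continuous_pi fun _ => continuous_clip.comp ((continuous_id.sub continuous_const).div_const _)

theorem config_apply_eq {h : ℕ → ℝ} {i j : Fin k} (hij : h (L.layer i) = h (L.layer j)) (s : ℝ) :
    L.config h s i = L.config h s j := by
  simp only [config, hij]

theorem norm_config (hd : 0 < d) {h : ℕ → ℝ} (hh : ∀ m, |h m - 2 * m| ≤ 1) (s : ℝ) :
    ‖L.config h s‖ = 1 := by
  have hd' : (0 : ℝ) < d := Nat.cast_pos.2 hd
  obtain ⟨i₀, hi₀⟩ := L.exists_layer_eq_zero
  obtain ⟨i₁, hi₁⟩ := L.exists_layer_eq_top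
  rcases le_total (d + 1 : ℝ) s with hs | hs
  · refine norm_eq_one_of_abs_le_one (fun i => abs_clip_le_one _) (i := i₀) ?_
    have := (abs_le.1 (hh 0)).2
    rw [config, hi₀, clip_of_one_le, abs_one]
    rw [le_div_iff₀ hd']
    push_cast at this
    linarith
  · refine norm_eq_one_of_abs_le_one (fun i => abs_clip_le_one _) (i := i₁) ?_
    have := (abs_le.1 (hh (d + 1))).1
    rw [config, hi₁, clip_of_le_neg_one, abs_neg, abs_one]
    rw [div_le_iff₀ hd']
    push_cast at this
    linarith

theorem norm_config_sub_config_le (hd : 0 < d) {h h' : ℕ → ℝ} (hh : ∀ m, |h m - h' m| ≤ 1)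
    (s : ℝ) : ‖L.config h s - L.config h' s‖ ≤ 1 / d := by
  have hd' : (0 : ℝ) < d := Nat.cast_pos.2 hd
  refine (pi_norm_le_iff_of_nonneg (by positivity)).2 fun i => ?_
  refine (abs_clip_sub_clip_le _ _).trans ?_
  rw [← sub_div, abs_div, abs_of_pos hd', sub_sub_sub_cancel_left, abs_sub_comm]
  gcongr
  exact hh _

theorem config_pathHeight_neg (hd : 0 < d) : L.config pathHeight (-d) = -1 := by
  have hd' : (0 : ℝ) < d := Nat.cast_pos.2 hd
  funext i
  refine clip_of_le_neg_one ?_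
  rw [div_le_iff₀ hd', pathHeight]
  have : (0 : ℝ) ≤ L.layer i := Nat.cast_nonneg _
  linarith

theorem config_pathHeight_three_mul_add_two (hd : 0 < d) :
    L.config pathHeight (3 * d + 2) = 1 := by
  have hd' : (0 : ℝ) < d := Nat.cast_pos.2 hd
  funext i
  refine clip_of_one_le ?_
  rw [le_div_iff₀ hd', pathHeight]
  have : (L.layer i : ℝ) ≤ d + 1 := by exact_mod_cast L.layer_le i
  linarith

theorem exists_config_pathHeight_eq_zero (hd : 0 < d) {F : (Fin k → ℝ) → Fin k → ℝ}
    (hFcont : ContinuousOn F {x | ‖x‖ = 1})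
    (hstep : ∀ x, ‖x‖ = 1 → ∀ i j, x i = x j → F x i = F x j) (hneg : F (-1) = -F 1) :
    ∃ s, ∀ i, L.layer i = d + 1 → F (L.config pathHeight s) i = 0 := by
  have hsphere : ∀ s, ‖L.config pathHeight s‖ = 1 :=
    L.norm_config hd fun m => by simp [pathHeight]
  obtain ⟨i₁, hi₁⟩ := L.exists_layer_eq_top
  set c : ℝ → ℝ := fun s => F (L.config pathHeight s) i₁
  have hc : Continuous c :=
    (continuous_apply i₁).comp (hFcont.comp_continuous (L.continuous_config _) hsphere)
  have h0 : (0 : ℝ) ∈ Set.uIcc (c (-d)) (c (3 * d + 2)) := by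
    simp only [c, L.config_pathHeight_neg hd, L.config_pathHeight_three_mul_add_two hd, hneg,
      Pi.neg_apply, Set.mem_uIcc]
    rcases le_total 0 (F 1 i₁) with h | h
    · exact Or.inl ⟨by linarith, h⟩
    · exact Or.inr ⟨h, by linarith⟩
  obtain ⟨s, -, hs⟩ := intermediate_value_uIcc hc.continuousOn h0
  refine ⟨s, fun i hi => (hstep _ (hsphere s) i i₁ ?_).trans hs⟩
  exact L.config_apply_eq (by rw [hi, hi₁]) s

def parityClass (q : ℕ) : Finset (Fin k) := {i | L.layer i ≤ d ∧ L.layer i % 2 = q}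

theorem exists_sum_le_two_mul_sum_parityClass {f : Fin k → ℝ}
    (htop : ∀ i, L.layer i = d + 1 → f i = 0) :
    ∃ q, ∑ i, f i ≤ 2 * ∑ i ∈ L.parityClass q, f i := by
  have hsplit : ∑ i, f i = ∑ i ∈ L.parityClass 0, f i + ∑ i ∈ L.parityClass 1, f i := by
    rw [← sum_add_sum_compl (L.parityClass 0)]
    congr 1
    refine (sum_subset (fun i hi => ?_) fun i hic hi => htop i ?_).symm
    · simp only [parityClass, mem_compl, mem_filter, mem_univ, true_and] at hi ⊢
      omega
    · have := L.layer_le i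
      simp only [parityClass, mem_compl, mem_filter, mem_univ, true_and] at hic hi
      omega
  rcases le_total (∑ i ∈ L.parityClass 0, f i) (∑ i ∈ L.parityClass 1, f i) with h | h
  · exact ⟨1, by linarith⟩
  · exact ⟨0, by linarith⟩

theorem one_add_mul_sum_parityClass_le {f : Fin k → ℝ} (hf : ∀ i, 0 ≤ f i) {q : ℕ}
    (hpair : ∀ i ∈ L.parityClass q, ∀ j, L.layer j = L.layer i ∨ L.layer j = L.layer i + 1 →
      f j = f i) :
    (1 + Q) * ∑ i ∈ L.parityClass q, f i ≤ ∑ i, f i := by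
  set S : Finset ℕ := {m ∈ range (d + 1) | m % 2 = q}
  have hP : L.parityClass q = ({i | L.layer i ∈ S} : Finset (Fin k)) := by
    ext i
    simp [parityClass, S]
  have hgrow : ∀ m ∈ S, Q * ∑ i with L.layer i = m, f i ≤ ∑ i with L.layer i = m + 1, f i := by
    intro m hm
    simp only [S, mem_filter, mem_range] at hm
    refine mul_sum_le_sum_of_forall_eq hf (fun i hi j hj => hpair i ?_ j ?_)
      (L.mul_card_le_card m (by omega))
    · simp only [mem_filter, mem_univ, true_and] at hi
      simp only [hP, mem_filter, mem_univ, true_and, hi, S, mem_range]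
      exact ⟨by omega, hm.2⟩
    · simp only [mem_union, mem_filter, mem_univ, true_and] at hi hj
      omega
  have hshift : ∑ m ∈ S, ∑ i with L.layer i = m + 1, f i ≤ ∑ i ∈ (L.parityClass q)ᶜ, f i := by
    calc ∑ m ∈ S, ∑ i with L.layer i = m + 1, f i
        = ∑ m ∈ S.image (· + 1), ∑ i with L.layer i = m, f i :=
          (sum_image (f := fun m => ∑ i with L.layer i = m, f i) (add_left_injective 1).injOn).symm
      _ = ∑ i with L.layer i ∈ S.image (· + 1), f i := sum_fiberwise_eq_sum_filter _ _ _ _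
      _ ≤ _ := sum_le_sum_of_subset_of_nonneg (fun i hi => ?_) fun i _ _ => hf i
    simp only [hP, S, mem_filter, mem_univ, true_and, mem_image, mem_range, mem_compl] at hi ⊢
    omega
  calc (1 + Q) * ∑ i ∈ L.parityClass q, f i
      = ∑ i ∈ L.parityClass q, f i + ∑ m ∈ S, Q * ∑ i with L.layer i = m, f i := by
        rw [← mul_sum, sum_fiberwise_eq_sum_filter, ← hP]
        ring
    _ ≤ ∑ i ∈ L.parityClass q, f i + ∑ i ∈ (L.parityClass q)ᶜ, f i := by
        gcongr
        exact (sum_le_sum hgrow).trans hshift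
    _ = ∑ i, f i := sum_add_sum_compl _ _

theorem exists_far_pair (L : Layering k d Q) (hd : 0 < d) {r : ℝ} (hr : 1 ≤ r)
    (hQ : (7 : ℝ) ^ r ≤ Q + 1) {F : (Fin k → ℝ) → Fin k → ℝ}
    (hFmaps : ∀ x, ‖x‖ = 1 → lrNorm r (F x) = 1) (hFcont : ContinuousOn F {x | ‖x‖ = 1})
    (hstep : ∀ x, ‖x‖ = 1 → ∀ i j, x i = x j → F x i = F x j) (hneg : F (-1) = -F 1) :
    ∃ x y : Fin k → ℝ, ‖x‖ = 1 ∧ ‖y‖ = 1 ∧ ‖x - y‖ ≤ 1 / d ∧ 1 / 2 ≤ lrNorm r (F x - F y) := by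
  have hr0 : 0 < r := by linarith
  obtain ⟨s, hs⟩ := L.exists_config_pathHeight_eq_zero hd hFcont hstep hneg
  set u := L.config pathHeight s
  have hu : ‖u‖ = 1 := L.norm_config hd (fun m => by simp [pathHeight]) s
  obtain ⟨q, hq⟩ := L.exists_sum_le_two_mul_sum_parityClass (f := fun i => |F u i| ^ r)
    fun i hi => by simp [hs i hi, Real.zero_rpow hr0.ne']
  set y := L.config (pairHeight q) s
  have hy : ‖y‖ = 1 := L.norm_config hd (abs_pairHeight_sub_le q) s
  have hsq := L.one_add_mul_sum_parityClass_le (f := fun i => |F y i| ^ r) (q := q)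
    (fun i => by positivity) fun i hi j hj => by
      have hiq : L.layer i % 2 = q := by simp [parityClass] at hi; exact hi.2
      have : y j = y i := by
        refine L.config_apply_eq ?_ s
        rcases hj with hj | hj <;> simp only [hj, pairHeight_succ hiq]
      simp only [hstep y hy j i this]
  have hu1 := sum_rpow_eq_one_of_lrNorm_eq_one hr0 (hFmaps u hu)
  have hy1 := sum_rpow_eq_one_of_lrNorm_eq_one hr0 (hFmaps y hy)
  refine ⟨u, y, hu, hy, L.norm_config_sub_config_le hd (fun m => ?_) s,
    half_le_lrNorm_sub hr (L.parityClass q) hu1 hy1 (by linarith) ?_⟩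
  · simpa [pathHeight, abs_sub_comm] using abs_pairHeight_sub_le q m
  · have h7 : (1 / 7 : ℝ) ^ r * 7 ^ r = 1 := by
      rw [← Real.mul_rpow] <;> norm_num
    have hP : 0 ≤ ∑ i ∈ L.parityClass q, |F y i| ^ r := sum_nonneg fun i _ => by positivity
    have : 0 ≤ (1 / 7 : ℝ) ^ r := by positivity
    nlinarith [mul_le_mul_of_nonneg_left hQ hP]

end Layering

theorem two_mul_floor_le_ceil {r : ℝ} (hr : 1 ≤ r) : 2 * ⌊(7 : ℝ) ^ r⌋₊ ≤ ⌈(19 : ℝ) ^ r⌉₊ := by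
  have h : 2 * (7 : ℝ) ^ r ≤ 19 ^ r := by
    calc 2 * (7 : ℝ) ^ r ≤ 19 / 7 * 7 ^ r := by gcongr; norm_num
      _ ≤ (19 / 7) ^ r * 7 ^ r := by gcongr; exact Real.self_le_rpow_of_one_le (by norm_num) hr
      _ = 19 ^ r := by rw [← Real.mul_rpow (by norm_num) (by norm_num)]; norm_num
  have := Nat.floor_le (by positivity : (0 : ℝ) ≤ 7 ^ r)
  have := Nat.le_ceil ((19 : ℝ) ^ r)
  exact_mod_cast (by linarith : (2 * ⌊(7 : ℝ) ^ r⌋₊ : ℝ) ≤ ⌈(19 : ℝ) ^ r⌉₊)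

theorem two_mul_pow_succ_le_pow {Q N d : ℕ} (hd : 2 ≤ d) (hQN : 2 * Q ≤ N) :
    2 * Q ^ (d + 1) ≤ N ^ (2 * d - 1) := by
  rcases Nat.eq_zero_or_pos Q with rfl | hQ
  · simp
  calc 2 * Q ^ (d + 1) ≤ 2 ^ (2 * d - 1) * Q ^ (2 * d - 1) :=
        Nat.mul_le_mul (le_self_pow₀ one_le_two (by omega)) (Nat.pow_le_pow_right hQ (by omega))
    _ = (2 * Q) ^ (2 * d - 1) := (mul_pow _ _ _).symm
    _ ≤ N ^ (2 * d - 1) := Nat.pow_le_pow_left hQN _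

/-- Theorem 5.2 of the paper: for `d ≥ 1`, `1 ≤ r < ∞`,
`k ≥ ⌈19^r⌉^(2d-1) + 1`, and any step preserving continuous map
`F : S_{ℓ∞^k} → S_{ℓ_r^k}` with `F(1,…,1) ≠ F(-1,…,-1)`, there are `x, y` with
`‖x - y‖_∞ ≤ 1/d` and `‖F x - F y‖_r ≥ 1/2`. -/
theorem stmt_15 (d : ℕ) (hd : 1 ≤ d) (r : ℝ) (hr : 1 ≤ r)
    (k : ℕ) (hk : (⌈(19 : ℝ) ^ r⌉₊) ^ (2 * d - 1) + 1 ≤ k)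
    (F : (Fin k → ℝ) → (Fin k → ℝ))
    (hFmaps : ∀ x, supNorm x = 1 → lrNorm r (F x) = 1)
    (hFcont : ContinuousOn F {x | supNorm x = 1})
    (hstep : ∀ x, supNorm x = 1 → ∀ i j, x i = x j → F x i = F x j)
    (hne : F (fun _ => (1 : ℝ)) ≠ F (fun _ => (-1 : ℝ))) :
    ∃ x y : Fin k → ℝ, supNorm x = 1 ∧ supNorm y = 1 ∧
      supNorm (x - y) ≤ 1 / (d : ℝ) ∧ 1 / 2 ≤ lrNorm r (F x - F y) := by
  simp only [supNorm_eq_norm] at hFmaps hFcont hstep ⊢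
  have hr0 : 0 < r := by linarith
  have hQ : 7 ≤ ⌊(7 : ℝ) ^ r⌋₊ :=
    Nat.le_floor (by simpa using Real.self_le_rpow_of_one_le (by norm_num : (1 : ℝ) ≤ 7) hr)
  have hQN := two_mul_floor_le_ceil hr
  have hk2 : 2 ≤ k := by
    have := Nat.one_le_pow (2 * d - 1) _ (by omega : 0 < ⌈(19 : ℝ) ^ r⌉₊)
    omega
  have : NeZero k := ⟨by omega⟩
  have hneg := apply_neg_one_eq_neg_apply_one hr0 hFmaps hstep hne
  rcases eq_or_lt_of_le hd with rfl | hd2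
  · have hgap : lrNorm r (F 1 - F (-1)) = 2 := by
      rw [hneg, sub_neg_eq_add, ← two_smul ℝ, lrNorm_smul hr0, hFmaps 1 norm_one]
      norm_num
    simpa using exists_far_pair_of_three_halves_le_lrNorm hk2 hr F (by rw [hgap]; norm_num)
  · obtain ⟨L⟩ := Layering.nonempty (k := k) (d := d) (by omega : 2 ≤ ⌊(7 : ℝ) ^ r⌋₊)
      (by have := two_mul_pow_succ_le_pow hd2 hQN; omega)
    exact L.exists_far_pair (by omega) hr (Nat.lt_floor_add_one _).le hFmaps hFcont hstep hneg
end

section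
/- Fix 1 ≤ r < ∞, d ∈ ℕ with d ≥ 1, and ε > 0. Let Q = {k_{2j} : j ≥ 1} ⊆ ℕ, where k_j = a^(j−1) and a = ⌈(32/ε + 2)^r⌉. Then for all m̄ = (m_1 < … < m_d) with m_1,…,m_d ∈ Q, all k ∈ Q with k > m_d, and all step preserving maps F : S⁺_{ℓ∞^k} → S⁺_{ℓ_r^k} with ω_F(1/d) ≤ ε/8, one has ‖F(z(m̄)) − k^{−1/r}·∑_{i=1}^k e_i‖_r ≤ ε, where (e_i)_{i=1}^k is the standard basis of ℓ_r^k. -/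
/-- The vector `z(m̄) = ∑_{s=1}^d (1 - (s-1)/d)·1_{(m_{s-1}, m_s]}` in `ℝ^k`, where
coordinate `i : Fin k` corresponds to the index `i+1 ∈ {1,…,k}`. -/
noncomputable def zVec (d k : ℕ) (m : ℕ → ℕ) : Fin k → ℝ :=
  fun i => ∑ s ∈ Finset.Icc 1 d, (1 - ((s : ℝ) - 1) / (d : ℝ)) *
    (if m (s - 1) ≤ (i : ℕ) ∧ (i : ℕ) < m s then 1 else 0)

open Finset

noncomputable def lrNormOn (r : ℝ) {ι : Type*} (s : Finset ι) (f : ι → ℝ) : ℝ :=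
  (∑ i ∈ s, |f i| ^ r) ^ (1 / r)

section lrNormOn

variable {ι : Type*} {r : ℝ} {s t : Finset ι} {f g : ι → ℝ}

lemma lrNorm_eq_lrNormOn_univ {k : ℕ} (f : Fin k → ℝ) : lrNorm r f = lrNormOn r univ f := rfl

lemma lrNormOn_nonneg : 0 ≤ lrNormOn r s f :=
  Real.rpow_nonneg (sum_nonneg fun _ _ => by positivity) _

lemma lrNormOn_congr (h : ∀ i ∈ s, f i = g i) : lrNormOn r s f = lrNormOn r s g := by
  unfold lrNormOn
  rw [sum_congr rfl fun i hi => by rw [h i hi]]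

lemma lrNormOn_abs : lrNormOn r s (fun i => |f i|) = lrNormOn r s f := by
  simp only [lrNormOn, abs_abs]

lemma rpow_lrNormOn (hr : r ≠ 0) : lrNormOn r s f ^ r = ∑ i ∈ s, |f i| ^ r := by
  rw [lrNormOn, one_div, Real.rpow_inv_rpow (sum_nonneg fun _ _ => by positivity) hr]

lemma lrNormOn_mono (hr : 0 < r) (h : ∀ i ∈ s, |f i| ≤ |g i|) :
    lrNormOn r s f ≤ lrNormOn r s g :=
  Real.rpow_le_rpow (sum_nonneg fun _ _ => by positivity)
    (sum_le_sum fun i hi => Real.rpow_le_rpow (abs_nonneg _) (h i hi) hr.le) (by positivity)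

lemma lrNormOn_mono_set (hr : 0 < r) (hst : s ⊆ t) : lrNormOn r s f ≤ lrNormOn r t f :=
  Real.rpow_le_rpow (sum_nonneg fun _ _ => by positivity)
    (sum_le_sum_of_subset_of_nonneg hst fun _ _ _ => by positivity) (by positivity)

lemma lrNormOn_add_le (hr : 1 ≤ r) : lrNormOn r s (f + g) ≤ lrNormOn r s f + lrNormOn r s g :=
  Real.Lp_add_le s f g hr

lemma lrNormOn_sub_le (hr : 1 ≤ r) : lrNormOn r s (f - g) ≤ lrNormOn r s f + lrNormOn r s g := by
  rw [sub_eq_add_neg]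
  refine (lrNormOn_add_le hr).trans_eq ?_
  simp only [lrNormOn, Pi.neg_apply, abs_neg]

lemma lrNormOn_union_le [DecidableEq ι] (hr : 1 ≤ r) (hst : Disjoint s t) :
    lrNormOn r (s ∪ t) f ≤ lrNormOn r s f + lrNormOn r t f := by
  unfold lrNormOn
  rw [sum_union hst]
  exact Real.rpow_add_le_add_rpow (sum_nonneg fun _ _ => by positivity)
    (sum_nonneg fun _ _ => by positivity) (by positivity) (div_le_one_of_le₀ hr (by positivity))

lemma lrNormOn_const_mul (hr : 0 < r) (c : ℝ) :
    lrNormOn r s (fun i => c * f i) = |c| * lrNormOn r s f := by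
  simp only [lrNormOn, abs_mul, Real.mul_rpow (abs_nonneg _) (abs_nonneg _), ← mul_sum]
  rw [Real.mul_rpow (by positivity) (sum_nonneg fun _ _ => by positivity), ← Real.rpow_mul
    (abs_nonneg _), mul_one_div_cancel hr.ne', Real.rpow_one]

lemma lrNormOn_const (hr : 0 < r) (c : ℝ) :
    lrNormOn r s (fun _ => c) = |c| * (#s : ℝ) ^ (1 / r) := by
  simpa [lrNormOn] using lrNormOn_const_mul (s := s) (f := fun _ => 1) hr c

lemma lrNormOn_eq_of_forall_eq (hr : 0 < r) {c : ℝ} (h : ∀ i ∈ s, f i = c) :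
    lrNormOn r s f = |c| * (#s : ℝ) ^ (1 / r) := by
  rw [lrNormOn_congr h, lrNormOn_const hr]

lemma abs_mul_rpow_le_lrNormOn (hr : 0 < r) (hst : s ⊆ t) {c : ℝ} (hf : ∀ i ∈ s, f i = c)
    {n C : ℝ} (hn : 0 ≤ n) (hC : 0 ≤ C) (hcard : n ≤ C ^ r * #s) :
    |c| * n ^ (1 / r) ≤ C * lrNormOn r t f := by
  calc |c| * n ^ (1 / r) ≤ |c| * (C ^ r * #s) ^ (1 / r) := by gcongr
    _ = C * lrNormOn r s f := by
      rw [lrNormOn_eq_of_forall_eq hr hf, Real.mul_rpow (by positivity) (by positivity), one_div,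
        Real.rpow_rpow_inv hC hr.ne']
      ring
    _ ≤ C * lrNormOn r t f := by gcongr; exact lrNormOn_mono_set hr hst

end lrNormOn

lemma lrNorm_const_rpow_neg {r : ℝ} (hr : 0 < r) {k : ℕ} (hk : 0 < k) :
    lrNorm r (fun _ : Fin k => (k : ℝ) ^ (-(1 / r))) = 1 := by
  rw [lrNorm_eq_lrNormOn_univ, lrNormOn_const hr, card_univ, Fintype.card_fin,
    abs_of_nonneg (by positivity), Real.rpow_neg (Nat.cast_nonneg k),
    inv_mul_cancel₀ (by positivity)]

lemma rpow_one_div_le_of_mul_le {r a n N : ℝ} (hr : 0 < r) (ha : 0 < a) (hn : 0 ≤ n)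
    (h : a * n ≤ N) : n ^ (1 / r) ≤ a ^ (-(1 / r)) * N ^ (1 / r) := by
  rw [Real.rpow_neg ha.le, ← Real.inv_rpow ha.le,
    ← Real.mul_rpow (inv_nonneg.2 ha.le) ((mul_nonneg ha.le hn).trans h)]
  exact Real.rpow_le_rpow hn (by rw [inv_mul_eq_div, le_div_iff₀ ha]; linarith) (by positivity)

lemma le_rpow_mul_of_le_mul {r C x y : ℝ} (hr : 1 ≤ r) (hC : 1 ≤ C) (hy : 0 ≤ y)
    (h : x ≤ C * y) : x ≤ C ^ r * y :=
  h.trans (mul_le_mul_of_nonneg_right (Real.self_le_rpow_of_one_le hC hr) hy)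

theorem lrNormOn_range_le_of_chain {r : ℝ} (hr : 1 ≤ r) {c : ℝ} (hc : 0 ≤ c) {g h : ℕ → ℝ}
    (hg : ∀ t, 0 ≤ g t) {d : ℕ} (hchain : ∀ t < d, g t ≤ c * g (t + 1) + h t) :
    lrNormOn r (range d) g ≤ c * (lrNormOn r (range d) g + g d) + lrNormOn r (range d) h := by
  have hr0 : 0 < r := by linarith
  have hshift : lrNormOn r (range d) (fun t => g (t + 1)) ≤ lrNormOn r (range d) g + g d :=
    calc lrNormOn r (range d) (fun t => g (t + 1)) ≤ lrNormOn r (range (d + 1)) g := by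
          refine Real.rpow_le_rpow (sum_nonneg fun _ _ => by positivity) ?_ (by positivity)
          rw [sum_range_succ' (fun t => |g t| ^ r)]
          exact le_add_of_nonneg_right (by positivity)
      _ ≤ lrNormOn r {d} g + lrNormOn r (range d) g := by
          rw [range_add_one, insert_eq]
          exact lrNormOn_union_le hr (disjoint_singleton_left.2 notMem_range_self)
      _ = lrNormOn r (range d) g + g d := by
          rw [lrNormOn_eq_of_forall_eq hr0 (fun i hi => by rw [mem_singleton.1 hi]),
            card_singleton, Nat.cast_one, Real.one_rpow, mul_one, abs_of_nonneg (hg d), add_comm]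
  calc lrNormOn r (range d) g
      ≤ lrNormOn r (range d) ((fun t => c * g (t + 1)) + fun t => |h t|) := by
        refine lrNormOn_mono hr0 fun t ht => ?_
        rw [abs_of_nonneg (hg t), Pi.add_apply, abs_of_nonneg (by have := hg (t + 1); positivity)]
        exact (hchain t (mem_range.1 ht)).trans (by gcongr; exact le_abs_self _)
    _ ≤ c * lrNormOn r (range d) (fun t => g (t + 1)) + lrNormOn r (range d) h := by
        refine (lrNormOn_add_le hr).trans_eq ?_
        rw [lrNormOn_const_mul hr0, abs_of_nonneg hc, lrNormOn_abs]
    _ ≤ c * (lrNormOn r (range d) g + g d) + lrNormOn r (range d) h := by gcongr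

def finIco (k l v : ℕ) : Finset (Fin k) := {i | l ≤ (i : ℕ) ∧ (i : ℕ) < v}

section finIco

variable {k l l' u v v' : ℕ}

@[simp] lemma mem_finIco {i : Fin k} : i ∈ finIco k l v ↔ l ≤ (i : ℕ) ∧ (i : ℕ) < v := by
  simp [finIco]

lemma card_finIco (hv : v ≤ k) : #(finIco k l v) = v - l := by
  have : finIco k l v = (Ico l v).attachFin fun _ hx => (mem_Ico.1 hx).2.trans_le hv := by
    ext i; simp
  rw [this, card_attachFin, Nat.card_Ico]

lemma finIco_zero_self : finIco k 0 k = univ := by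
  ext i; simp

lemma finIco_mono (hl : l' ≤ l) (hv : v ≤ v') : finIco k l v ⊆ finIco k l' v' := by
  intro i; simp only [mem_finIco]; omega

lemma disjoint_finIco : Disjoint (finIco k l u) (finIco k u v) := by
  rw [disjoint_left]; intro i; simp only [mem_finIco]; omega

lemma finIco_union (hlu : l ≤ u) (huv : u ≤ v) : finIco k l u ∪ finIco k u v = finIco k l v := by
  ext i; simp only [mem_union, mem_finIco]; omega

lemma sum_range_sum_finIco {M : Type*} [AddCommMonoid M] (f : Fin k → M) {p : ℕ → ℕ}
    (hp : Monotone p) (d : ℕ) :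
    ∑ t ∈ range d, ∑ i ∈ finIco k (p t) (p (t + 1)), f i = ∑ i ∈ finIco k (p 0) (p d), f i := by
  induction d with
  | zero => exact (sum_eq_zero fun i hi => by simp only [mem_finIco] at hi; omega).symm
  | succ d ih =>
    rw [sum_range_succ, ih, ← sum_union disjoint_finIco,
      finIco_union (hp (Nat.zero_le d)) (hp d.le_succ)]

lemma lrNormOn_range_lrNormOn_finIco {r : ℝ} (hr : r ≠ 0) (f : Fin k → ℝ) {p : ℕ → ℕ}
    (hp : Monotone p) (d : ℕ) :
    lrNormOn r (range d) (fun t => lrNormOn r (finIco k (p t) (p (t + 1))) f)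
      = lrNormOn r (finIco k (p 0) (p d)) f := by
  rw [lrNormOn, lrNormOn]
  simp only [abs_of_nonneg lrNormOn_nonneg, rpow_lrNormOn hr, sum_range_sum_finIco _ hp]

end finIco

lemma exists_mem_block {M : ℕ → ℕ} (hM0 : M 0 = 0) {d n : ℕ} (hn : n < M (d + 1)) :
    ∃ t ≤ d, M t ≤ n ∧ n < M (t + 1) := by
  classical
  have hex : ∃ t, n < M (t + 1) := ⟨d, hn⟩
  refine ⟨Nat.find hex, Nat.find_min' hex hn, ?_, Nat.find_spec hex⟩
  rcases Nat.eq_zero_or_pos (Nat.find hex) with h | h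
  · rw [h, hM0]; exact Nat.zero_le n
  · have := Nat.find_min hex (Nat.sub_one_lt_of_lt h)
    rwa [Nat.sub_add_cancel h, not_lt] at this

section zVec

variable {d k : ℕ} {M : ℕ → ℕ}

-- Blocks are numbered from `0`: on block `t`, i.e. `[M t, M (t+1))`, `z` takes the value
-- `1 - t/d` (the term `s = t + 1` of `zVec`), which is `0` on the tail block `t = d`.
lemma zVec_apply_of_mem_block (hM : Monotone M) (hd : d ≠ 0) {t : ℕ} (ht : t ≤ d) {i : Fin k}
    (hi : M t ≤ i ∧ (i : ℕ) < M (t + 1)) : zVec d k M i = 1 - t / d := by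
  unfold zVec
  rcases ht.lt_or_eq with ht | rfl
  · rw [sum_eq_single (t + 1)]
    · rw [Nat.add_sub_cancel, if_pos hi]; push_cast; ring
    · intro s hs hst
      rw [if_neg, mul_zero]
      rintro ⟨h1, h2⟩
      rcases Nat.lt_or_gt_of_ne hst with h | h
      · have := hM (show s ≤ t by omega); omega
      · have := hM (show t + 1 ≤ s - 1 by omega); omega
    · intro h; exact absurd (mem_Icc.2 ⟨by omega, by omega⟩) h
  · rw [sum_eq_zero, div_self (Nat.cast_ne_zero.2 hd), sub_self]
    intro s hs
    rw [if_neg, mul_zero]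
    rintro ⟨-, h2⟩
    have := hM (mem_Icc.1 hs).2; omega

lemma zVec_mem_Icc (hM : Monotone M) (hd : d ≠ 0) (hM0 : M 0 = 0) (hk : k ≤ M (d + 1))
    (i : Fin k) : zVec d k M i ∈ Set.Icc 0 1 := by
  obtain ⟨t, ht, hi⟩ := exists_mem_block hM0 (i.2.trans_le hk)
  rw [zVec_apply_of_mem_block hM hd ht hi]
  have h1 : (t : ℝ) / d ≤ 1 := div_le_one_of_le₀ (by exact_mod_cast ht) (by positivity)
  have h0 : 0 ≤ (t : ℝ) / d := by positivity
  constructor <;> linarith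

lemma supNorm_zVec (hM : Monotone M) (hd : d ≠ 0) (hM0 : M 0 = 0) (hk : k ≤ M (d + 1))
    (hM1 : 0 < M 1) (hk0 : 0 < k) : supNorm (zVec d k M) = 1 := by
  have hle : ∀ i, |zVec d k M i| ≤ 1 := fun i => by
    obtain ⟨h0, h1⟩ := zVec_mem_Icc hM hd hM0 hk i
    rwa [abs_of_nonneg h0]
  have h0 : zVec d k M ⟨0, hk0⟩ = 1 := by
    rw [zVec_apply_of_mem_block hM hd (Nat.zero_le d) ⟨by simp [hM0], hM1⟩]; simp
  exact le_antisymm (Real.iSup_le hle zero_le_one)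
    (le_ciSup_of_le (Set.finite_range _).bddAbove ⟨0, hk0⟩ (by rw [h0, abs_one]))

lemma abs_zVec_sub_zVec_le {M' : ℕ → ℕ} (hM : Monotone M) (hM' : Monotone M') (hd : d ≠ 0)
    (hM0 : M 0 = 0) (hM'0 : M' 0 = 0) (hk : k ≤ M (d + 1)) (hle : ∀ t, M t ≤ M' t)
    (hinter : ∀ t ≤ d, M' t ≤ M (t + 1)) (i : Fin k) :
    |zVec d k M i - zVec d k M' i| ≤ 1 / d := by
  obtain ⟨t, ht, hi⟩ := exists_mem_block hM0 (i.2.trans_le hk)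
  obtain ⟨t', ht', hi'⟩ := exists_mem_block hM'0 (i.2.trans_le (hk.trans (hle _)))
  rw [zVec_apply_of_mem_block hM hd ht hi, zVec_apply_of_mem_block hM' hd ht' hi']
  have h1 : t' ≤ t := Nat.lt_succ_iff.1 (hM.reflect_lt ((hle t').trans_lt (hi'.1.trans_lt hi.2)))
  have h2 : t ≤ t' + 1 := by
    rcases ht'.lt_or_eq with h | rfl
    · exact Nat.lt_succ_iff.1 (hM.reflect_lt (hi.1.trans_lt (hi'.2.trans_le (hinter _ h))))
    · omega
  have hd0 : (0 : ℝ) < d := by positivity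
  rw [show 1 - (t : ℝ) / d - (1 - t' / d) = ((t' : ℝ) - t) / d by ring, abs_div,
    abs_of_pos hd0]
  gcongr
  rw [abs_le]
  constructor
  · have : (t : ℝ) ≤ t' + 1 := by exact_mod_cast h2
    linarith
  · have : (t' : ℝ) ≤ t := by exact_mod_cast h1
    linarith

end zVec

lemma apply_eq_extend_of_mem_block {d k : ℕ} {M : ℕ → ℕ} (hM : Monotone M) (hd : d ≠ 0)
    {f : Fin k → ℝ} (hf : ∀ i j, zVec d k M i = zVec d k M j → f i = f j) {t : ℕ} (ht : t ≤ d)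
    {i : Fin k} (hi : M t ≤ i ∧ (i : ℕ) < M (t + 1)) :
    f i = Function.extend (zVec d k M) f 0 (1 - t / d) := by
  rw [← zVec_apply_of_mem_block hM hd ht hi]
  exact (Function.FactorsThrough.extend_apply (fun i j h => hf i j h) 0 i).symm

section TwoScale

variable {r : ℝ} {a d k : ℕ} {M : ℕ → ℕ} {u w : Fin k → ℝ} {b b' : ℕ → ℝ}

-- On `[a M t, M (t+1))` the pair `(u, w)` equals `(b t, b' t)`, on `[M (t+1), a M (t+1))` it
-- equals `(b (t+1), b' t)`, and the gap `a² M t ≤ M (t+1)` makes both intervals longer than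
-- `M (t+1) / 2`.
theorem abs_mul_rpow_le_next_block (hr : 1 ≤ r) (ha : 2 ≤ a) (hM : Monotone M) (hMk : M (d + 1) = k)
    (hgap : ∀ t ≤ d, a * a * M t ≤ M (t + 1))
    (hu : ∀ t ≤ d, ∀ i : Fin k, M t ≤ i → (i : ℕ) < M (t + 1) → u i = b t)
    (hw : ∀ t < d, ∀ i : Fin k, a * M t ≤ i → (i : ℕ) < a * M (t + 1) → w i = b' t)
    {t : ℕ} (ht : t < d) :
    |b t| * (M (t + 1) : ℝ) ^ (1 / r)
      ≤ (a : ℝ) ^ (-(1 / r)) * (|b (t + 1)| * (M (t + 1 + 1) : ℝ) ^ (1 / r))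
        + 3 * lrNormOn r (finIco k (a * M t) (a * M (t + 1))) (u - w) := by
  have hr0 : 0 < r := by linarith
  have hle : ∀ n, n ≤ a * n := fun n => Nat.le_mul_of_pos_left n (by omega)
  have hgapt : 2 * (a * M t) ≤ M (t + 1) := by
    have : 2 * (a * M t) ≤ a * a * M t := by
      rw [← mul_assoc]; exact Nat.mul_le_mul_right _ (Nat.mul_le_mul_right _ ha)
    exact this.trans (hgap t ht.le)
  have hMt : a * M (t + 1) ≤ M (t + 1 + 1) := (Nat.mul_le_mul_right _ (hle a)).trans (hgap _ ht)
  have hkt : M (t + 1 + 1) ≤ k := hMk ▸ hM (by omega)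
  have hkt' : M (t + 1) ≤ k := hMk ▸ hM (by omega)
  have hcur : |b t - b' t| * (M (t + 1) : ℝ) ^ (1 / r)
      ≤ 2 * lrNormOn r (finIco k (a * M t) (a * M (t + 1))) (u - w) := by
    refine abs_mul_rpow_le_lrNormOn hr0 (finIco_mono le_rfl (hle _)) (fun i hi => ?_)
      (by positivity) zero_le_two ?_
    · rw [mem_finIco] at hi
      rw [Pi.sub_apply, hu t ht.le i ((hle _).trans hi.1) hi.2,
        hw t ht i hi.1 (hi.2.trans_le (hle _))]
    · rw [card_finIco (by omega)]
      refine le_rpow_mul_of_le_mul hr one_le_two (by positivity) ?_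
      exact_mod_cast (by omega : M (t + 1) ≤ 2 * (M (t + 1) - a * M t))
  have hnext : |b (t + 1) - b' t| * (M (t + 1) : ℝ) ^ (1 / r)
      ≤ 1 * lrNormOn r (finIco k (a * M t) (a * M (t + 1))) (u - w) := by
    refine abs_mul_rpow_le_lrNormOn hr0 (finIco_mono (hgapt.trans' (by omega)) le_rfl)
      (fun i hi => ?_) (by positivity) zero_le_one ?_
    · rw [mem_finIco] at hi
      rw [Pi.sub_apply, hu (t + 1) ht i hi.1 (hi.2.trans_le hMt),
        hw t ht i (hgapt.trans' (by omega) |>.trans hi.1) hi.2]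
    · rw [card_finIco (by omega), Real.one_rpow, one_mul]
      have : 2 * M (t + 1) ≤ a * M (t + 1) := Nat.mul_le_mul_right _ ha
      exact_mod_cast (by omega : M (t + 1) ≤ a * M (t + 1) - M (t + 1))
  have hscale : (M (t + 1) : ℝ) ^ (1 / r) ≤ (a : ℝ) ^ (-(1 / r)) * (M (t + 1 + 1) : ℝ) ^ (1 / r) :=
    rpow_one_div_le_of_mul_le hr0 (by positivity) (by positivity) (by exact_mod_cast hMt)
  have htri : |b t| ≤ |b (t + 1)| + |b t - b' t| + |b (t + 1) - b' t| :=
    calc |b t| = |b (t + 1) + (b t - b' t) - (b (t + 1) - b' t)| := by ring_nf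
      _ ≤ _ := (abs_sub _ _).trans (by gcongr; exact abs_add_le _ _)
  calc |b t| * (M (t + 1) : ℝ) ^ (1 / r)
      ≤ (|b (t + 1)| + |b t - b' t| + |b (t + 1) - b' t|) * (M (t + 1) : ℝ) ^ (1 / r) := by
        gcongr
    _ ≤ _ := by
        rw [add_mul, add_mul, mul_left_comm]
        linarith [mul_le_mul_of_nonneg_left hscale (abs_nonneg (b (t + 1)))]

theorem one_sub_mul_lrNormOn_finIco_le (hr : 1 ≤ r) (ha : 2 ≤ a) (hM : Monotone M)
    (hM0 : M 0 = 0) (hMk : M (d + 1) = k) (hgap : ∀ t ≤ d, a * a * M t ≤ M (t + 1))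
    (hu1 : lrNorm r u ≤ 1)
    (hu : ∀ t ≤ d, ∀ i : Fin k, M t ≤ i → (i : ℕ) < M (t + 1) → u i = b t)
    (hw : ∀ t < d, ∀ i : Fin k, a * M t ≤ i → (i : ℕ) < a * M (t + 1) → w i = b' t) :
    (1 - (a : ℝ) ^ (-(1 / r))) * lrNormOn r (finIco k 0 (M d)) u
      ≤ 2 * (a : ℝ) ^ (-(1 / r)) + 3 * lrNorm r (u - w) := by
  have hr0 : 0 < r := by linarith
  have hθ0 : 0 ≤ (a : ℝ) ^ (-(1 / r)) := by positivity
  have hθ1 : (a : ℝ) ^ (-(1 / r)) ≤ 1 := Real.rpow_le_one_of_one_le_of_nonpos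
    (by exact_mod_cast (by omega : 1 ≤ a)) (by simp; positivity)
  set g : ℕ → ℝ := fun t => |b t| * (M (t + 1) : ℝ) ^ (1 / r)
  have hchain := lrNormOn_range_le_of_chain hr hθ0 (g := g)
    (fun t => by positivity) fun t ht => abs_mul_rpow_le_next_block hr ha hM hMk hgap hu hw ht
  have hgd : g d ≤ 2 := by
    have hMd : 2 * M d ≤ k := hMk ▸ (Nat.mul_le_mul_right _ (by nlinarith)).trans (hgap d le_rfl)
    calc g d = |b d| * (k : ℝ) ^ (1 / r) := by simp only [g, hMk]
      _ ≤ 2 * lrNorm r u := abs_mul_rpow_le_lrNormOn hr0 (subset_univ (finIco k (M d) k))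
          (fun i hi => hu d le_rfl i (mem_finIco.1 hi).1 (hMk ▸ (mem_finIco.1 hi).2))
          (by positivity) zero_le_two (by
            rw [card_finIco le_rfl]
            refine le_rpow_mul_of_le_mul hr one_le_two (by positivity) ?_
            exact_mod_cast (by omega : k ≤ 2 * (k - M d)))
      _ ≤ 2 := by linarith
  have herr : lrNormOn r (range d)
      (fun t => 3 * lrNormOn r (finIco k (a * M t) (a * M (t + 1))) (u - w))
      ≤ 3 * lrNorm r (u - w) := by
    rw [lrNormOn_const_mul hr0, abs_of_pos three_pos,
      lrNormOn_range_lrNormOn_finIco hr0.ne' _ (fun _ _ h => Nat.mul_le_mul_left a (hM h))]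
    gcongr
    exact lrNormOn_mono_set hr0 (subset_univ _)
  have hhead : lrNormOn r (finIco k 0 (M d)) u ≤ lrNormOn r (range d) g := by
    rw [← hM0, ← lrNormOn_range_lrNormOn_finIco hr0.ne' _ hM]
    refine lrNormOn_mono hr0 fun t ht => ?_
    have ht := mem_range.1 ht
    rw [lrNormOn_eq_of_forall_eq hr0 fun i hi => hu t ht.le i (mem_finIco.1 hi).1
      (mem_finIco.1 hi).2, card_finIco (hMk ▸ hM (by omega))]
    simp only [g, abs_mul, abs_abs, abs_of_nonneg (Real.rpow_nonneg (Nat.cast_nonneg _) _)]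
    gcongr
    exact_mod_cast Nat.sub_le _ _
  calc (1 - (a : ℝ) ^ (-(1 / r))) * lrNormOn r (finIco k 0 (M d)) u
      ≤ (1 - (a : ℝ) ^ (-(1 / r))) * lrNormOn r (range d) g := by gcongr
    _ ≤ 2 * (a : ℝ) ^ (-(1 / r)) + 3 * lrNorm r (u - w) := by
        linarith [mul_le_mul_of_nonneg_left hgd hθ0]

end TwoScale

theorem lrNorm_sub_const_le {r : ℝ} (hr : 1 ≤ r) {k n : ℕ} (hnk : n ≤ k) {u : Fin k → ℝ}
    (hu : lrNorm r u = 1) {c : ℝ} (hc : 0 ≤ c) (htail : ∀ i : Fin k, n ≤ i → u i = c) :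
    lrNorm r (u - fun _ => (k : ℝ) ^ (-(1 / r)))
      ≤ 2 * lrNormOn r (finIco k 0 n) u + 2 * ((k : ℝ) ^ (-(1 / r)) * (n : ℝ) ^ (1 / r)) := by
  have hr0 : 0 < r := by linarith
  rcases Nat.eq_zero_or_pos k with rfl | hk
  · simp [lrNorm, Real.zero_rpow (inv_pos.2 hr0).ne'] at hu
  set κ := (k : ℝ) ^ (-(1 / r))
  have hκ0 : 0 ≤ κ := by positivity
  set τ := ((k - n : ℕ) : ℝ) ^ (1 / r)
  have hτ0 : 0 ≤ τ := by positivity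
  have hsplit : ∀ f, lrNorm r f ≤ lrNormOn r (finIco k 0 n) f + lrNormOn r (finIco k n k) f := by
    intro f
    rw [lrNorm_eq_lrNormOn_univ, ← finIco_zero_self, ← finIco_union (Nat.zero_le n) hnk]
    exact lrNormOn_union_le hr disjoint_finIco
  have hTail : ∀ {f : Fin k → ℝ} {x : ℝ}, (∀ i : Fin k, n ≤ i → f i = x) →
      lrNormOn r (finIco k n k) f = |x| * τ := fun hf => by
    rw [lrNormOn_eq_of_forall_eq hr0 fun i hi => hf i (mem_finIco.1 hi).1, card_finIco le_rfl]
  have hκH : lrNormOn r (finIco k 0 n) (fun _ => κ) = κ * (n : ℝ) ^ (1 / r) := by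
    rw [lrNormOn_const hr0, card_finIco hnk, Nat.sub_zero, abs_of_nonneg hκ0]
  have hκ1 : lrNorm r (fun _ : Fin k => κ) = 1 := lrNorm_const_rpow_neg hr0 hk
  -- `u` and `κ 𝟙` both have norm one, so their tail norms `c τ` and `κ τ` are at most one and at
  -- least one minus the corresponding head norm.
  have h1 : 1 ≤ lrNormOn r (finIco k 0 n) u + c * τ := by
    simpa [hu, hTail htail, abs_of_nonneg hc] using hsplit u
  have h2 : 1 ≤ κ * (n : ℝ) ^ (1 / r) + κ * τ := by
    simpa [hκ1, hTail (fun _ _ => rfl), abs_of_nonneg hκ0, hκH] using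
      hsplit fun _ => κ
  have h3 : c * τ ≤ 1 := by
    simpa [← lrNorm_eq_lrNormOn_univ, hu, hTail htail, abs_of_nonneg hc] using
      lrNormOn_mono_set (f := u) hr0 (subset_univ (finIco k n k))
  have h4 : κ * τ ≤ 1 := by
    simpa [← lrNorm_eq_lrNormOn_univ, hκ1, hTail (fun _ _ => rfl), abs_of_nonneg hκ0] using
      lrNormOn_mono_set (f := fun _ => κ) hr0 (subset_univ (finIco k n k))
  have hhead : lrNormOn r (finIco k 0 n) (u - fun _ => κ)
      ≤ lrNormOn r (finIco k 0 n) u + κ * (n : ℝ) ^ (1 / r) :=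
    (lrNormOn_sub_le hr).trans_eq (by rw [hκH])
  have htl : lrNormOn r (finIco k n k) (u - fun _ => κ)
      ≤ lrNormOn r (finIco k 0 n) u + κ * (n : ℝ) ^ (1 / r) := by
    rw [hTail fun i hi => by rw [Pi.sub_apply, htail i hi], ← abs_of_nonneg hτ0, ← abs_mul,
      sub_mul, abs_le]
    constructor <;> linarith
  linarith [hsplit (u - fun _ => κ)]

theorem one_sub_mul_lrNorm_sub_const_le {r : ℝ} (hr : 1 ≤ r) {a d k : ℕ} (hd : d ≠ 0)
    (ha : 2 ≤ a) {M : ℕ → ℕ} (hM : Monotone M) (hM0 : M 0 = 0) (hM1 : 0 < M 1)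
    (hMk : M (d + 1) = k) (hgap : ∀ t ≤ d, a * a * M t ≤ M (t + 1)) {u w : Fin k → ℝ}
    (hu1 : lrNorm r u = 1) (hu0 : ∀ i, 0 ≤ u i)
    (hu : ∀ i j, zVec d k M i = zVec d k M j → u i = u j)
    (hw : ∀ i j, zVec d k (fun t => a * M t) i = zVec d k (fun t => a * M t) j → w i = w j) :
    (1 - (a : ℝ) ^ (-(1 / r))) * lrNorm r (u - fun _ => (k : ℝ) ^ (-(1 / r)))
      ≤ 6 * ((a : ℝ) ^ (-(1 / r)) + lrNorm r (u - w)) := by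
  have hr0 : 0 < r := by linarith
  have hle : ∀ n, n ≤ a * n := fun n => Nat.le_mul_of_pos_left n (by omega)
  have haMd : a * M d ≤ k := hMk ▸ (Nat.mul_le_mul_right _ (hle a)).trans (hgap d le_rfl)
  have hMd : M d < k := by
    have : 0 < M d := hM1.trans_le (hM (Nat.one_le_iff_ne_zero.2 hd))
    nlinarith
  have hk0 : (0 : ℝ) < k := by exact_mod_cast (Nat.zero_le _).trans_lt hMd
  have hblock : ∀ t ≤ d, ∀ i : Fin k, M t ≤ i → (i : ℕ) < M (t + 1) →
      u i = Function.extend (zVec d k M) u 0 (1 - t / d) :=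
    fun t ht i h1 h2 => apply_eq_extend_of_mem_block hM hd hu ht ⟨h1, h2⟩
  have hhead : (1 - (a : ℝ) ^ (-(1 / r))) * lrNormOn r (finIco k 0 (M d)) u
      ≤ 2 * (a : ℝ) ^ (-(1 / r)) + 3 * lrNorm r (u - w) :=
    one_sub_mul_lrNormOn_finIco_le hr ha hM hM0 hMk hgap hu1.le hblock
      fun t ht i h1 h2 => apply_eq_extend_of_mem_block (fun _ _ h => Nat.mul_le_mul_left a (hM h))
        hd hw ht.le ⟨h1, h2⟩
  have htail := lrNorm_sub_const_le hr hMd.le hu1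
    (by rw [← hblock d le_rfl ⟨k - 1, by omega⟩ (by simp; omega) (by simp [hMk]; omega)]
        exact hu0 _)
    fun i hi => hblock d le_rfl i hi (i.2.trans_eq hMk.symm)
  have hκ : (k : ℝ) ^ (-(1 / r)) * (M d : ℝ) ^ (1 / r) ≤ (a : ℝ) ^ (-(1 / r)) :=
    calc _ ≤ (k : ℝ) ^ (-(1 / r)) * ((a : ℝ) ^ (-(1 / r)) * (k : ℝ) ^ (1 / r)) := by
          gcongr
          exact rpow_one_div_le_of_mul_le hr0 (by positivity) (by positivity)
            (by exact_mod_cast haMd)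
      _ = (a : ℝ) ^ (-(1 / r)) := by
          rw [mul_left_comm, Real.rpow_neg hk0.le, inv_mul_cancel₀ (by positivity), mul_one]
  have hθ1 : (a : ℝ) ^ (-(1 / r)) ≤ 1 := Real.rpow_le_one_of_one_le_of_nonpos
    (by exact_mod_cast (by omega : 1 ≤ a)) (by simp; positivity)
  linarith [mul_le_mul_of_nonneg_left htail (sub_nonneg.2 hθ1),
    mul_nonneg (by positivity : (0 : ℝ) ≤ (a : ℝ) ^ (-(1 / r)))
      (by positivity : (0 : ℝ) ≤ (k : ℝ) ^ (-(1 / r)) * (M d : ℝ) ^ (1 / r))]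

theorem one_sub_mul_lrNorm_apply_zVec_sub_le {r η : ℝ} (hr : 1 ≤ r) {a d k : ℕ} (hd : d ≠ 0)
    (ha : 2 ≤ a) {M : ℕ → ℕ} (hM : Monotone M) (hM0 : M 0 = 0) (hM1 : 0 < M 1)
    (hMk : M (d + 1) = k) (hgap : ∀ t ≤ d, a * a * M t ≤ M (t + 1))
    (F : (Fin k → ℝ) → (Fin k → ℝ))
    (hFmaps : ∀ x : Fin k → ℝ, supNorm x = 1 → (∀ i, 0 ≤ x i) →
      (lrNorm r (F x) = 1 ∧ ∀ i, 0 ≤ F x i))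
    (hstep : ∀ x : Fin k → ℝ, supNorm x = 1 → (∀ i, 0 ≤ x i) →
      ∀ i j, x i = x j → F x i = F x j)
    (homega : ∀ x y : Fin k → ℝ, supNorm x = 1 → (∀ i, 0 ≤ x i) →
      supNorm y = 1 → (∀ i, 0 ≤ y i) → supNorm (x - y) ≤ 1 / (d : ℝ) →
      lrNorm r (F x - F y) ≤ η) :
    (1 - (a : ℝ) ^ (-(1 / r))) * lrNorm r (F (zVec d k M) - fun _ => (k : ℝ) ^ (-(1 / r)))
      ≤ 6 * ((a : ℝ) ^ (-(1 / r)) + η) := by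
  have hk0 : 0 < k := hMk ▸ hM1.trans_le (hM (by omega))
  have hle : ∀ n, n ≤ a * n := fun n => Nat.le_mul_of_pos_left n (by omega)
  have hMa : Monotone fun t => a * M t := fun _ _ h => Nat.mul_le_mul_left a (hM h)
  have hMa0 : a * M 0 = 0 := by rw [hM0, mul_zero]
  set z := zVec d k M
  set y := zVec d k fun t => a * M t
  have hz1 : supNorm z = 1 := supNorm_zVec hM hd hM0 hMk.ge hM1 hk0
  have hz0 : ∀ i, 0 ≤ z i := fun i => (zVec_mem_Icc hM hd hM0 hMk.ge i).1
  have hy1 : supNorm y = 1 :=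
    supNorm_zVec hMa hd hMa0 (hMk ▸ hle k) (Nat.mul_pos (by omega) hM1) hk0
  have hy0 : ∀ i, 0 ≤ y i := fun i => (zVec_mem_Icc hMa hd hMa0 (hMk ▸ hle k) i).1
  have hzy : supNorm (z - y) ≤ 1 / d :=
    Real.iSup_le (fun i => abs_zVec_sub_zVec_le hM hMa hd hM0 hMa0 hMk.ge (fun t => hle _)
      (fun t ht => (Nat.mul_le_mul_right _ (hle a)).trans (hgap t ht)) i) (by positivity)
  obtain ⟨hFz1, hFz0⟩ := hFmaps z hz1 hz0
  have h := one_sub_mul_lrNorm_sub_const_le hr hd ha hM hM0 hM1 hMk hgap hFz1 hFz0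
    (hstep z hz1 hz0) (hstep y hy1 hy0)
  linarith [homega z y hz1 hz0 hy1 hy0 hzy]

-- `m̄` continued by `m_{d+1} = k`, so that the tail of `z(m̄)` becomes its last block.
def breakpoints (m : ℕ → ℕ) (d k : ℕ) : ℕ → ℕ := fun s => if s ≤ d then m s else k

section breakpoints

variable {m : ℕ → ℕ} {d k : ℕ}

lemma breakpoints_lt_succ (hmono : ∀ s, s < d → m s < m (s + 1)) (hkm : m d < k) {t : ℕ}
    (ht : t ≤ d) : breakpoints m d k t < breakpoints m d k (t + 1) := by
  simp only [breakpoints, if_pos ht]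
  split_ifs with h
  · exact hmono t (by omega)
  · obtain rfl : t = d := by omega
    exact hkm

lemma monotone_breakpoints (hmono : ∀ s, s < d → m s < m (s + 1)) (hkm : m d < k) :
    Monotone (breakpoints m d k) := by
  refine monotone_nat_of_le_succ fun t => ?_
  by_cases ht : t ≤ d
  · exact (breakpoints_lt_succ hmono hkm ht).le
  · simp [breakpoints, ht, show ¬t + 1 ≤ d by omega]

lemma zVec_breakpoints : zVec d k (breakpoints m d k) = zVec d k m :=
  funext fun _ => sum_congr rfl fun s hs => by
    have := (mem_Icc.1 hs).2
    simp only [breakpoints, if_pos this, if_pos (show s - 1 ≤ d by omega)]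

end breakpoints

lemma mul_mul_pow_le_pow {a i j : ℕ} (hi : 1 ≤ i) (h : a ^ (2 * i - 1) < a ^ (2 * j - 1)) :
    a * a * a ^ (2 * i - 1) ≤ a ^ (2 * j - 1) := by
  rcases Nat.lt_or_ge a 2 with ha | ha
  · interval_cases a
    · simp
    · simp at h
  · have := (Nat.pow_lt_pow_iff_right (by omega)).1 h
    calc a * a * a ^ (2 * i - 1) = a ^ (2 * i - 1 + 2) := by ring
      _ ≤ a ^ (2 * j - 1) := Nat.pow_le_pow_right (by omega) (by omega)

lemma two_le_natCeil_rpow {r x : ℝ} (hr : 1 ≤ r) (hx : 2 ≤ x) : 2 ≤ ⌈x ^ r⌉₊ := by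
  have : x ≤ x ^ r := Real.self_le_rpow_of_one_le (by linarith) hr
  exact_mod_cast hx.trans (this.trans (Nat.le_ceil _))

lemma rpow_neg_one_div_natCeil_rpow_le {r x : ℝ} (hr : 0 < r) (hx : 0 < x) :
    (⌈x ^ r⌉₊ : ℝ) ^ (-(1 / r)) ≤ x⁻¹ := by
  have hceil : x ^ r ≤ ⌈x ^ r⌉₊ := Nat.le_ceil _
  have hpos : 0 < (⌈x ^ r⌉₊ : ℝ) := (Real.rpow_pos_of_pos hx r).trans_le hceil
  rw [Real.rpow_neg hpos.le, inv_le_inv₀ (by positivity) hx]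
  calc x = (x ^ r) ^ (1 / r) := by rw [one_div, Real.rpow_rpow_inv hx.le hr.ne']
    _ ≤ _ := Real.rpow_le_rpow (by positivity) hceil (by positivity)

lemma mul_mul_le_of_forall_eq_pow {a d : ℕ} {M : ℕ → ℕ} (hM0 : M 0 = 0)
    (hlt : ∀ t ≤ d, M t < M (t + 1))
    (hpow : ∀ t, 1 ≤ t → t ≤ d + 1 → ∃ j, 1 ≤ j ∧ M t = a ^ (2 * j - 1)) :
    ∀ t ≤ d, a * a * M t ≤ M (t + 1) := by
  intro t ht
  rcases Nat.eq_zero_or_pos t with rfl | htpos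
  · simp [hM0]
  obtain ⟨i, hi, hi'⟩ := hpow t htpos (by omega)
  obtain ⟨j, -, hj'⟩ := hpow (t + 1) (by omega) (by omega)
  have := hlt t ht
  rw [hi', hj'] at this ⊢
  exact mul_mul_pow_le_pow hi this

/-- Theorem 6.2 of the paper: concentration inequality for step preserving
maps `F : S⁺_{ℓ∞^k} → S⁺_{ℓ_r^k}` along `Q = {k_{2j} : j ≥ 1}` with `k_j = a^(j-1)`,
`a = ⌈(32/ε + 2)^r⌉`. -/
theorem stmt_18 (r : ℝ) (hr : 1 ≤ r) (d : ℕ) (hd : 1 ≤ d) (ε : ℝ) (hε : 0 < ε)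
    (Q : Set ℕ)
    (hQ : Q = {t | ∃ j : ℕ, 1 ≤ j ∧ t = (⌈(32 / ε + 2 : ℝ) ^ r⌉₊) ^ (2 * j - 1)})
    (m : ℕ → ℕ) (hm0 : m 0 = 0)
    (hmono : ∀ s, s < d → m s < m (s + 1))
    (hmQ : ∀ s, 1 ≤ s → s ≤ d → m s ∈ Q)
    (k : ℕ) (hkQ : k ∈ Q) (hkm : m d < k)
    (F : (Fin k → ℝ) → (Fin k → ℝ))
    (hFmaps : ∀ x : Fin k → ℝ, supNorm x = 1 → (∀ i, 0 ≤ x i) →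
      (lrNorm r (F x) = 1 ∧ ∀ i, 0 ≤ F x i))
    (hstep : ∀ x : Fin k → ℝ, supNorm x = 1 → (∀ i, 0 ≤ x i) →
      ∀ i j, x i = x j → F x i = F x j)
    (homega : ∀ x y : Fin k → ℝ, supNorm x = 1 → (∀ i, 0 ≤ x i) →
      supNorm y = 1 → (∀ i, 0 ≤ y i) → supNorm (x - y) ≤ 1 / (d : ℝ) →
      lrNorm r (F x - F y) ≤ ε / 8) :
    lrNorm r (F (zVec d k m) - fun _ => (k : ℝ) ^ (-(1 / r))) ≤ ε := by
  have hr0 : 0 < r := by linarith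
  have hd0 : d ≠ 0 := by omega
  have hM := monotone_breakpoints hmono hkm
  have hM0 : breakpoints m d k 0 = 0 := by simp [breakpoints, hm0]
  have hM1 : 0 < breakpoints m d k 1 := hM0 ▸ breakpoints_lt_succ hmono hkm (Nat.zero_le d)
  have hMk : breakpoints m d k (d + 1) = k := by simp [breakpoints]
  rw [← zVec_breakpoints]
  rcases le_or_gt 2 ε with hε2 | hε2
  · obtain ⟨hFz1, -⟩ := hFmaps _ (supNorm_zVec hM hd0 hM0 hMk.ge hM1 (by omega))
      fun i => (zVec_mem_Icc hM hd0 hM0 hMk.ge i).1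
    calc _ ≤ lrNorm r (F _) + lrNorm r (fun _ : Fin k => (k : ℝ) ^ (-(1 / r))) :=
          lrNormOn_sub_le hr
      _ = 2 := by rw [hFz1, lrNorm_const_rpow_neg hr0 (by omega)]; norm_num
      _ ≤ ε := hε2
  have h32 : 0 < 32 / ε := by positivity
  set a := ⌈(32 / ε + 2 : ℝ) ^ r⌉₊
  have hθ : (a : ℝ) ^ (-(1 / r)) ≤ ε / 32 :=
    (rpow_neg_one_div_natCeil_rpow_le hr0 (by positivity)).trans
      (inv_le_of_inv_le₀ (by positivity) (by rw [inv_div]; linarith))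
  rw [hQ] at hmQ hkQ
  have hgap := mul_mul_le_of_forall_eq_pow (a := a) hM0
    (fun t ht => breakpoints_lt_succ hmono hkm ht) fun t ht1 ht2 => by
      rcases ht2.lt_or_eq with h | rfl
      · simpa [breakpoints, Nat.le_of_lt_succ h] using hmQ t ht1 (by omega)
      · simpa [breakpoints] using hkQ
  have hkey := one_sub_mul_lrNorm_apply_zVec_sub_le hr hd0 (two_le_natCeil_rpow hr (by linarith))
    hM hM0 hM1 hMk hgap F hFmaps hstep homega
  have hX : 0 ≤ lrNorm r (F (zVec d k (breakpoints m d k)) - fun _ => (k : ℝ) ^ (-(1 / r))) :=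
    lrNormOn_nonneg
  linarith [mul_le_mul_of_nonneg_right (show (a : ℝ) ^ (-(1 / r)) ≤ 1 / 16 by linarith) hX]
end
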